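/- arXiv:2102.10032 — 8 statements merged into one kernel-verified Lean document; each statement's English description precedes it below -/
import Mathlib

section
/- Let n ≥ 1 and D ≥ 0 be integers, X a set, Φ : X → ZMod n → (Fin D → ℝ) any map, h₁, h₂ : ZMod n → ℝ, and S₂ a finite subset of ZMod n. Define the pooled first-layer map B(x)(u) := Σ_{v ∈ ZMod n} h₁(u − v)·Φ(x)(v) ∈ ℝ^D, and the two-layer feature map Ψ(x)(t)(p,q) := Σ_{u ∈ ZMod n} h₂(t − u)·(B(x)(u + p)) ⊗ (B(x)(u + q)) ∈ Matrix (Fin D) (Fin D) ℝ for t ∈ ZMod n and p, q ∈ S₂, where (a ⊗ b)(i,j) := a(i)·b(j) is the outer product. Then for every F : ZMod n → S₂ → S₂ → Matrix (Fin D) (Fin D) ℝ and every x ∈ X, Σ_{t ∈ ZMod n} Σ_{p ∈ S₂} Σ_{q ∈ S₂} Σ_{i,j ∈ Fin D} F(t)(p,q)(i,j)·Ψ(x)(t)(p,q)(i,j) = Σ_{p ∈ S₂} Σ_{q ∈ S₂} Σ_{u,v ∈ ZMod n} Σ_{i,j ∈ Fin D} Φ(x)(u)(i)·G_{p,q}(u,v)(i,j)·Φ(x)(v)(j),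 where G_{p,q}(u,v) := Σ_{t,a ∈ ZMod n} h₂(t − a)·h₁(a + p − u)·h₁(a + q − v)·F(t)(p,q). -/
/-- **Proposition 2 (representation half): RKHS of the 2-layer CKN with quadratic `k₂`.**
With pooled first-layer map `B x u = ∑ v, h₁ (u - v) • Φ x v` and two-layer feature map
`Ψ x t (p, q) = ∑ u, h₂ (t - u) • (B x (u + p)) ⊗ (B x (u + q))`, any linear functional
`⟪F, Ψ x⟫` of the feature map is an additive model of pairwise interaction terms
`Φ(x)(u)ᵀ G_{p,q}(u,v) Φ(x)(v)`, with
`G_{p,q}(u,v) = ∑ t a, h₂ (t - a) * h₁ (a + p - u) * h₁ (a + q - v) • F t p q`. -/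
theorem two_layer_ckn_quadratic_representation
    (n : ℕ) [NeZero n] (D : ℕ) {X : Type*}
    (Φ : X → ZMod n → Fin D → ℝ) (h₁ h₂ : ZMod n → ℝ) (S₂ : Finset (ZMod n))
    (F : ZMod n → ZMod n → ZMod n → Matrix (Fin D) (Fin D) ℝ) (x : X) :
    let B : ZMod n → Fin D → ℝ := fun u i => ∑ v : ZMod n, h₁ (u - v) * Φ x v i
    let Ψ : ZMod n → ZMod n → ZMod n → Matrix (Fin D) (Fin D) ℝ := fun t p q =>
      fun i j => ∑ u : ZMod n, h₂ (t - u) * (B (u + p) i * B (u + q) j)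
    let G : ZMod n → ZMod n → ZMod n → ZMod n → Matrix (Fin D) (Fin D) ℝ :=
      fun p q u v => fun i j =>
        ∑ t : ZMod n, ∑ a : ZMod n,
          h₂ (t - a) * h₁ (a + p - u) * h₁ (a + q - v) * F t p q i j
    (∑ t : ZMod n, ∑ p ∈ S₂, ∑ q ∈ S₂, ∑ i : Fin D, ∑ j : Fin D,
        F t p q i j * Ψ t p q i j) =
      ∑ p ∈ S₂, ∑ q ∈ S₂, ∑ u : ZMod n, ∑ v : ZMod n, ∑ i : Fin D, ∑ j : Fin D,
        Φ x u i * G p q u v i j * Φ x v j := by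
  intro B Ψ G
  rw [Finset.sum_comm]
  refine Finset.sum_congr rfl fun p _ => ?_
  rw [Finset.sum_comm]
  refine Finset.sum_congr rfl fun q _ => ?_
  show (∑ t : ZMod n, ∑ i : Fin D, ∑ j : Fin D,
        F t p q i j * ∑ u : ZMod n, h₂ (t - u) *
          ((∑ v : ZMod n, h₁ (u + p - v) * Φ x v i) * (∑ w : ZMod n, h₁ (u + q - w) * Φ x w j))) =
      ∑ u : ZMod n, ∑ v : ZMod n, ∑ i : Fin D, ∑ j : Fin D,
        Φ x u i * (∑ t : ZMod n, ∑ a : ZMod n,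
          h₂ (t - a) * h₁ (a + p - u) * h₁ (a + q - v) * F t p q i j) * Φ x v j
  calc (∑ t : ZMod n, ∑ i : Fin D, ∑ j : Fin D,
        F t p q i j * ∑ u : ZMod n, h₂ (t - u) *
          ((∑ v : ZMod n, h₁ (u + p - v) * Φ x v i) * (∑ w : ZMod n, h₁ (u + q - w) * Φ x w j)))
      = ∑ z : ZMod n × Fin D × Fin D × ZMod n × ZMod n × ZMod n,
          F z.1 p q z.2.1 z.2.2.1 * (h₂ (z.1 - z.2.2.2.1) *
            ((h₁ (z.2.2.2.1 + p - z.2.2.2.2.2) * Φ x z.2.2.2.2.2 z.2.1) *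
             (h₁ (z.2.2.2.1 + q - z.2.2.2.2.1) * Φ x z.2.2.2.2.1 z.2.2.1))) := by
        simp only [Fintype.sum_prod_type, Finset.mul_sum, Finset.sum_mul]
    _ = ∑ z : ZMod n × ZMod n × Fin D × Fin D × ZMod n × ZMod n,
          Φ x z.1 z.2.2.1 * (h₂ (z.2.2.2.2.1 - z.2.2.2.2.2) * h₁ (z.2.2.2.2.2 + p - z.1) *
            h₁ (z.2.2.2.2.2 + q - z.2.1) * F z.2.2.2.2.1 p q z.2.2.1 z.2.2.2.1) * Φ x z.2.1 z.2.2.2.1 := by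
        refine Fintype.sum_equiv
          ⟨fun z => (z.2.2.2.2.2, z.2.2.2.2.1, z.2.1, z.2.2.1, z.1, z.2.2.2.1),
           fun z => (z.2.2.2.2.1, z.2.2.1, z.2.2.2.1, z.2.2.2.2.2, z.2.1, z.1),
           fun z => rfl, fun z => rfl⟩ _ _ fun z => ?_
        simp only [Equiv.coe_fn_mk]
        ring
    _ = ∑ u : ZMod n, ∑ v : ZMod n, ∑ i : Fin D, ∑ j : Fin D,
        Φ x u i * (∑ t : ZMod n, ∑ a : ZMod n,
          h₂ (t - a) * h₁ (a + p - u) * h₁ (a + q - v) * F t p q i j) * Φ x v j := by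
        simp only [Fintype.sum_prod_type, Finset.mul_sum, Finset.sum_mul]
end

section
/- Let n ≥ 1 be an integer, (X, μ) a probability space, k : X → ZMod n → ZMod n → ℝ such that x ↦ k(x)(u,v) is integrable for every u, v ∈ ZMod n, h : ZMod n → ℝ with h(u) ≥ 0 for all u, and σ² : ZMod n → ℝ such that ∫ k(x)(u,v) dμ(x) ≤ σ²(u − v) for all u, v ∈ ZMod n. Then ∫ ( Σ_{t ∈ ZMod n} Σ_{u ∈ ZMod n} Σ_{v ∈ ZMod n} h(t − u)·h(t − v)·k(x)(u,v) ) dμ(x) ≤ n · Σ_{r ∈ ZMod n} ⟨h, L_r h⟩ · σ²(r). -/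
open MeasureTheory

/-- **Key estimate of Proposition 3 (generalization for the 1-layer CKN).**
`E_x[K₁(x,x)] ≤ |Ω| ∑_r ⟨h, L_r h⟩ σ²_r`, where
`K₁(x,x) = ∑_{t,u,v} h(t-u) h(t-v) k(x)(u,v)`, `h ≥ 0` is the pooling filter, and
`σ²(u - v)` bounds the expected patch auto-correlation `∫ k(x)(u,v) dμ`. -/
theorem one_layer_ckn_trace_bound
    (n : ℕ) [NeZero n] {X : Type*} [MeasurableSpace X] (μ : Measure X)
    [IsProbabilityMeasure μ] (k : X → ZMod n → ZMod n → ℝ)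
    (hint : ∀ u v : ZMod n, Integrable (fun x => k x u v) μ)
    (h : ZMod n → ℝ) (hpos : ∀ u, 0 ≤ h u)
    (σ2 : ZMod n → ℝ) (hσ : ∀ u v : ZMod n, ∫ x, k x u v ∂μ ≤ σ2 (u - v)) :
    (∫ x, (∑ t : ZMod n, ∑ u : ZMod n, ∑ v : ZMod n,
        h (t - u) * h (t - v) * k x u v) ∂μ) ≤
      n * ∑ r : ZMod n, (∑ u : ZMod n, h u * h (u - r)) * σ2 r := by
  have hik : ∀ (t u v : ZMod n),
      Integrable (fun x => h (t - u) * h (t - v) * k x u v) μ :=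
    fun t u v => ((hint u v).const_mul _)
  have h1 : (∫ x, (∑ t : ZMod n, ∑ u : ZMod n, ∑ v : ZMod n,
        h (t - u) * h (t - v) * k x u v) ∂μ)
      = ∑ t : ZMod n, ∑ u : ZMod n, ∑ v : ZMod n,
        h (t - u) * h (t - v) * (∫ x, k x u v ∂μ) := by
    rw [integral_finset_sum _ (fun t _ => by
      exact integrable_finset_sum _ (fun u _ =>
        integrable_finset_sum _ (fun v _ => hik t u v)))]
    refine Finset.sum_congr rfl fun t _ => ?_
    rw [integral_finset_sum _ (fun u _ =>
      integrable_finset_sum _ (fun v _ => hik t u v))]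
    refine Finset.sum_congr rfl fun u _ => ?_
    rw [integral_finset_sum _ (fun v _ => hik t u v)]
    exact Finset.sum_congr rfl fun v _ => integral_const_mul _ _
  rw [h1]
  have h2 : (∑ t : ZMod n, ∑ u : ZMod n, ∑ v : ZMod n,
        h (t - u) * h (t - v) * (∫ x, k x u v ∂μ))
      ≤ ∑ t : ZMod n, ∑ u : ZMod n, ∑ v : ZMod n,
        h (t - u) * h (t - v) * σ2 (u - v) := by
    gcongr with t _ u _ v _
    · exact mul_nonneg (hpos _) (hpos _)
    · exact hσ u v
  refine h2.trans (le_of_eq ?_)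
  have eq1 : ∀ t : ZMod n, (∑ u : ZMod n, ∑ v : ZMod n,
      h (t - u) * h (t - v) * σ2 (u - v))
      = ∑ r : ZMod n, (∑ u : ZMod n, h u * h (u - r)) * σ2 r := by
    intro t
    have e1 : (∑ u : ZMod n, ∑ v : ZMod n, h (t - u) * h (t - v) * σ2 (u - v))
        = ∑ a : ZMod n, ∑ b : ZMod n, h a * h b * σ2 (b - a) := by
      refine Fintype.sum_equiv (Equiv.subLeft t) _ _ fun a => ?_
      refine Fintype.sum_equiv (Equiv.subLeft t) _ _ fun b => ?_
      simp [Equiv.subLeft]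
    rw [e1, Finset.sum_comm]
    have e2 : ∀ b : ZMod n, (∑ a : ZMod n, h a * h b * σ2 (b - a))
        = ∑ r : ZMod n, h (b - r) * h b * σ2 r := by
      intro b
      refine Fintype.sum_equiv (Equiv.subLeft b) _ _ fun r => ?_
      simp [Equiv.subLeft]
    simp_rw [e2]
    rw [Finset.sum_comm]
    refine Finset.sum_congr rfl fun r _ => ?_
    rw [Finset.sum_mul]
    refine Finset.sum_congr rfl fun b _ => by ring
  simp_rw [eq1]
  rw [Finset.sum_const, Finset.card_univ, ZMod.card, nsmul_eq_mul]
end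

section
/- Let n ≥ 1 be an integer and h₁, h₂ : ZMod n → ℝ. Then Σ_{u,v,v',w₁,w₂ ∈ ZMod n} h₂(u − v)·h₂(u − v')·h₁(v − w₁)·h₁(v − w₂)·h₁(v' − w₁)·h₁(v' − w₂) = n · Σ_{r ∈ ZMod n} ⟨h₂, L_r h₂⟩ · ⟨h₁, L_r h₁⟩². -/
/-- **Coefficient identity in the proof of Proposition 4 (2-layer CKN).**
The total weight of the diagonal terms in the expansion of `K₂(x,x)`:
`∑_{u,v,v',w₁,w₂} h₂(u-v) h₂(u-v') h₁(v-w₁) h₁(v-w₂) h₁(v'-w₁) h₁(v'-w₂)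
  = n ∑_r ⟨h₂, L_r h₂⟩ ⟨h₁, L_r h₁⟩²`. -/
theorem two_layer_ckn_diagonal_weight
    (n : ℕ) [NeZero n] (h₁ h₂ : ZMod n → ℝ) :
    (∑ u : ZMod n, ∑ v : ZMod n, ∑ v' : ZMod n, ∑ w₁ : ZMod n, ∑ w₂ : ZMod n,
        h₂ (u - v) * h₂ (u - v') * h₁ (v - w₁) * h₁ (v - w₂) * h₁ (v' - w₁) *
          h₁ (v' - w₂)) =
      n * ∑ r : ZMod n,
        (∑ a : ZMod n, h₂ a * h₂ (a - r)) * (∑ a : ZMod n, h₁ a * h₁ (a - r)) ^ 2 := by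
  have key : ∀ v v' : ZMod n,
      (∑ u : ZMod n, ∑ w₁ : ZMod n, ∑ w₂ : ZMod n,
        h₂ (u - v) * h₂ (u - v') * h₁ (v - w₁) * h₁ (v - w₂) * h₁ (v' - w₁) *
          h₁ (v' - w₂))
      = (∑ a : ZMod n, h₂ a * h₂ (a - (v - v'))) *
          (∑ a : ZMod n, h₁ a * h₁ (a - (v - v'))) ^ 2 := by
    intro v v'
    have e2 : (∑ u : ZMod n, h₂ (u - v) * h₂ (u - v'))
        = ∑ a : ZMod n, h₂ a * h₂ (a - (v - v')) := by
      refine Fintype.sum_equiv (Equiv.subRight v') _ _ fun u => ?_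
      simp only [Equiv.subRight_apply, sub_sub_sub_cancel_right]
      ring
    have e1 : (∑ w : ZMod n, h₁ (v - w) * h₁ (v' - w))
        = ∑ b : ZMod n, h₁ b * h₁ (b - (v - v')) := by
      refine Fintype.sum_equiv (Equiv.subLeft v) _ _ fun w => ?_
      simp only [Equiv.subLeft_apply, sub_sub_sub_cancel_left]
    calc (∑ u : ZMod n, ∑ w₁ : ZMod n, ∑ w₂ : ZMod n,
        h₂ (u - v) * h₂ (u - v') * h₁ (v - w₁) * h₁ (v - w₂) * h₁ (v' - w₁) *
          h₁ (v' - w₂))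
        = (∑ u : ZMod n, h₂ (u - v) * h₂ (u - v')) *
            ((∑ w : ZMod n, h₁ (v - w) * h₁ (v' - w)) *
              (∑ w : ZMod n, h₁ (v - w) * h₁ (v' - w))) := by
          rw [Finset.sum_mul]
          refine Finset.sum_congr rfl fun u _ => ?_
          rw [Finset.sum_mul_sum, Finset.mul_sum]
          refine Finset.sum_congr rfl fun w₁ _ => ?_
          rw [Finset.mul_sum]
          exact Finset.sum_congr rfl fun w₂ _ => by ring
      _ = _ := by rw [e1, e2]; ring
  calc (∑ u : ZMod n, ∑ v : ZMod n, ∑ v' : ZMod n, ∑ w₁ : ZMod n, ∑ w₂ : ZMod n,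
        h₂ (u - v) * h₂ (u - v') * h₁ (v - w₁) * h₁ (v - w₂) * h₁ (v' - w₁) *
          h₁ (v' - w₂))
      = ∑ v : ZMod n, ∑ v' : ZMod n, ∑ u : ZMod n, ∑ w₁ : ZMod n, ∑ w₂ : ZMod n,
        h₂ (u - v) * h₂ (u - v') * h₁ (v - w₁) * h₁ (v - w₂) * h₁ (v' - w₁) *
          h₁ (v' - w₂) := by
        rw [Finset.sum_comm]
        exact Finset.sum_congr rfl fun v _ => Finset.sum_comm
    _ = ∑ v : ZMod n, ∑ v' : ZMod n,
          (∑ a : ZMod n, h₂ a * h₂ (a - (v - v'))) *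
            (∑ a : ZMod n, h₁ a * h₁ (a - (v - v'))) ^ 2 :=
        Finset.sum_congr rfl fun v _ => Finset.sum_congr rfl fun v' _ => key v v'
    _ = ∑ v : ZMod n, ∑ r : ZMod n,
          (∑ a : ZMod n, h₂ a * h₂ (a - r)) * (∑ a : ZMod n, h₁ a * h₁ (a - r)) ^ 2 :=
        Finset.sum_congr rfl fun v _ =>
          Fintype.sum_equiv (Equiv.subLeft v) _ _ fun v' => by
            simp [Equiv.subLeft_apply]
    _ = _ := by
        rw [Finset.sum_const, Finset.card_univ, ZMod.card, nsmul_eq_mul]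
end

section
/- Let n ≥ 1 be an integer, S₂ a finite subset of ZMod n with |S₂| = s, (X, μ) a probability space, k : X → ZMod n → ZMod n → ℝ measurable such that for all w₁, w₁', w₂, w₂' ∈ ZMod n the function x ↦ k(x)(w₁,w₁')·k(x)(w₂,w₂') is integrable with ∫ k(x)(w₁,w₁')·k(x)(w₂,w₂') dμ(x) ≤ 1 if w₁ = w₁' and w₂ = w₂', and ≤ ε otherwise, for some ε ≥ 0. Let h₁, h₂ : ZMod n → ℝ be nonnegative with Σ_u h₁(u) = 1 and Σ_u h₂(u) = 1. Define K₂(x) := Σ_{p ∈ S₂} Σ_{q ∈ S₂} Σ_{u,v,v' ∈ ZMod n} h₂(u − v)·h₂(u − v') · Σ_{w₁,w₂,w₁',w₂' ∈ ZMod n} h₁(v − w₁)·h₁(v − w₂)·h₁(v' − w₁')·h₁(v' − w₂')·k(x)(w₁ − p, w₁' − p)·k(x)(w₂ − q, w₂' − q). Then ∫ K₂(x) dμ(x) ≤ s²·n·( Σ_{r ∈ ZMod n} ⟨h₂, L_r h₂⟩·⟨h₁, L_r h₁⟩² + ε ). -/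
open MeasureTheory

/-- **Trace bound (equation (8)) of Proposition 4: generalization for the 2-layer CKN.**
For the expansion `K₂(x)` of the squared feature-map norm of a two-layer convolutional
kernel with quadratic second layer, patch set `S₂` of cardinality `s`, and ℓ¹-normalized
nonnegative pooling filters `h₁, h₂`, one has
`∫ K₂(x) dμ ≤ s² n (∑_r ⟨h₂, L_r h₂⟩ ⟨h₁, L_r h₁⟩² + ε)`, assuming
`∫ k(x)(w₁,w₁') k(x)(w₂,w₂') dμ ≤ 1` when `w₁ = w₁'` and `w₂ = w₂'`, and `≤ ε` otherwise. -/
theorem two_layer_ckn_trace_bound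
    (n : ℕ) [NeZero n] (S₂ : Finset (ZMod n)) (s : ℕ) (hcard : S₂.card = s)
    {X : Type*} [MeasurableSpace X] (μ : Measure X) [IsProbabilityMeasure μ]
    (k : X → ZMod n → ZMod n → ℝ)
    (hmeas : ∀ u v : ZMod n, Measurable fun x => k x u v)
    (ε : ℝ) (hε : 0 ≤ ε)
    (hint : ∀ w₁ w₁' w₂ w₂' : ZMod n,
      Integrable (fun x => k x w₁ w₁' * k x w₂ w₂') μ)
    (hdiag : ∀ w₁ w₂ : ZMod n, (∫ x, k x w₁ w₁ * k x w₂ w₂ ∂μ) ≤ 1)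
    (hoff : ∀ w₁ w₁' w₂ w₂' : ZMod n, w₁ ≠ w₁' ∨ w₂ ≠ w₂' →
      (∫ x, k x w₁ w₁' * k x w₂ w₂' ∂μ) ≤ ε)
    (h₁ h₂ : ZMod n → ℝ) (h₁pos : ∀ u, 0 ≤ h₁ u) (h₂pos : ∀ u, 0 ≤ h₂ u)
    (h₁sum : ∑ u : ZMod n, h₁ u = 1) (h₂sum : ∑ u : ZMod n, h₂ u = 1) :
    (∫ x, (∑ p ∈ S₂, ∑ q ∈ S₂, ∑ u : ZMod n, ∑ v : ZMod n, ∑ v' : ZMod n,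
        h₂ (u - v) * h₂ (u - v') *
          ∑ w₁ : ZMod n, ∑ w₂ : ZMod n, ∑ w₁' : ZMod n, ∑ w₂' : ZMod n,
            h₁ (v - w₁) * h₁ (v - w₂) * h₁ (v' - w₁') * h₁ (v' - w₂') *
              k x (w₁ - p) (w₁' - p) * k x (w₂ - q) (w₂' - q)) ∂μ) ≤
      (s : ℝ) ^ 2 * n *
        ((∑ r : ZMod n, (∑ a : ZMod n, h₂ a * h₂ (a - r)) *
            (∑ a : ZMod n, h₁ a * h₁ (a - r)) ^ 2) + ε) := by
  classical
  have hsum1 : ∀ v : ZMod n, ∑ w : ZMod n, h₁ (v - w) = 1 := by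
    intro v
    rw [← h₁sum]
    exact Fintype.sum_equiv (Equiv.subLeft v) _ _ (fun w => rfl)
  have hsum2 : ∀ v : ZMod n, ∑ w : ZMod n, h₂ (v - w) = 1 := by
    intro v
    rw [← h₂sum]
    exact Fintype.sum_equiv (Equiv.subLeft v) _ _ (fun w => rfl)
  -- integrability ladder
  have intW : ∀ p q v v' w₁ w₂ w₁' w₂' : ZMod n,
      Integrable (fun x => h₁ (v - w₁) * h₁ (v - w₂) * h₁ (v' - w₁') * h₁ (v' - w₂') *
        k x (w₁ - p) (w₁' - p) * k x (w₂ - q) (w₂' - q)) μ := by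
    intro p q v v' w₁ w₂ w₁' w₂'
    have := (hint (w₁ - p) (w₁' - p) (w₂ - q) (w₂' - q)).const_mul
      (h₁ (v - w₁) * h₁ (v - w₂) * h₁ (v' - w₁') * h₁ (v' - w₂'))
    simpa [mul_assoc] using this
  have intVV : ∀ p q u v v' : ZMod n,
      Integrable (fun x => h₂ (u - v) * h₂ (u - v') *
        ∑ w₁ : ZMod n, ∑ w₂ : ZMod n, ∑ w₁' : ZMod n, ∑ w₂' : ZMod n,
          h₁ (v - w₁) * h₁ (v - w₂) * h₁ (v' - w₁') * h₁ (v' - w₂') *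
            k x (w₁ - p) (w₁' - p) * k x (w₂ - q) (w₂' - q)) μ := by
    intro p q u v v'
    exact (integrable_finset_sum _ fun w₁ _ => integrable_finset_sum _ fun w₂ _ =>
      integrable_finset_sum _ fun w₁' _ => integrable_finset_sum _ fun w₂' _ =>
        intW p q v v' w₁ w₂ w₁' w₂').const_mul _
  have intV' : ∀ p q u v : ZMod n, Integrable (fun x => ∑ v' : ZMod n,
      h₂ (u - v) * h₂ (u - v') *
        ∑ w₁ : ZMod n, ∑ w₂ : ZMod n, ∑ w₁' : ZMod n, ∑ w₂' : ZMod n,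
          h₁ (v - w₁) * h₁ (v - w₂) * h₁ (v' - w₁') * h₁ (v' - w₂') *
            k x (w₁ - p) (w₁' - p) * k x (w₂ - q) (w₂' - q)) μ :=
    fun p q u v => integrable_finset_sum _ fun v' _ => intVV p q u v v'
  have intV : ∀ p q u : ZMod n, Integrable (fun x => ∑ v : ZMod n, ∑ v' : ZMod n,
      h₂ (u - v) * h₂ (u - v') *
        ∑ w₁ : ZMod n, ∑ w₂ : ZMod n, ∑ w₁' : ZMod n, ∑ w₂' : ZMod n,
          h₁ (v - w₁) * h₁ (v - w₂) * h₁ (v' - w₁') * h₁ (v' - w₂') *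
            k x (w₁ - p) (w₁' - p) * k x (w₂ - q) (w₂' - q)) μ :=
    fun p q u => integrable_finset_sum _ fun v _ => intV' p q u v
  have intInner : ∀ p q : ZMod n, Integrable (fun x => ∑ u : ZMod n, ∑ v : ZMod n,
      ∑ v' : ZMod n, h₂ (u - v) * h₂ (u - v') *
        ∑ w₁ : ZMod n, ∑ w₂ : ZMod n, ∑ w₁' : ZMod n, ∑ w₂' : ZMod n,
          h₁ (v - w₁) * h₁ (v - w₂) * h₁ (v' - w₁') * h₁ (v' - w₂') *
            k x (w₁ - p) (w₁' - p) * k x (w₂ - q) (w₂' - q)) μ :=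
    fun p q => integrable_finset_sum _ fun u _ => intV p q u
  -- main per-(p,q) bound
  have main : ∀ p q : ZMod n,
      (∫ x, ∑ u : ZMod n, ∑ v : ZMod n, ∑ v' : ZMod n,
        h₂ (u - v) * h₂ (u - v') *
          ∑ w₁ : ZMod n, ∑ w₂ : ZMod n, ∑ w₁' : ZMod n, ∑ w₂' : ZMod n,
            h₁ (v - w₁) * h₁ (v - w₂) * h₁ (v' - w₁') * h₁ (v' - w₂') *
              k x (w₁ - p) (w₁' - p) * k x (w₂ - q) (w₂' - q) ∂μ) ≤
      (n : ℝ) * ((∑ r : ZMod n, (∑ a : ZMod n, h₂ a * h₂ (a - r)) *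
            (∑ a : ZMod n, h₁ a * h₁ (a - r)) ^ 2) + ε) := by
    intro p q
    have heq : (∫ x, ∑ u : ZMod n, ∑ v : ZMod n, ∑ v' : ZMod n,
        h₂ (u - v) * h₂ (u - v') *
          ∑ w₁ : ZMod n, ∑ w₂ : ZMod n, ∑ w₁' : ZMod n, ∑ w₂' : ZMod n,
            h₁ (v - w₁) * h₁ (v - w₂) * h₁ (v' - w₁') * h₁ (v' - w₂') *
              k x (w₁ - p) (w₁' - p) * k x (w₂ - q) (w₂' - q) ∂μ) =
        ∑ u : ZMod n, ∑ v : ZMod n, ∑ v' : ZMod n,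
          h₂ (u - v) * h₂ (u - v') *
            ∑ w₁ : ZMod n, ∑ w₂ : ZMod n, ∑ w₁' : ZMod n, ∑ w₂' : ZMod n,
              h₁ (v - w₁) * h₁ (v - w₂) * h₁ (v' - w₁') * h₁ (v' - w₂') *
                (∫ x, k x (w₁ - p) (w₁' - p) * k x (w₂ - q) (w₂' - q) ∂μ) := by
      rw [integral_finset_sum _ fun u _ => intV p q u]
      refine Finset.sum_congr rfl fun u _ => ?_
      rw [integral_finset_sum _ fun v _ => intV' p q u v]
      refine Finset.sum_congr rfl fun v _ => ?_
      rw [integral_finset_sum _ fun v' _ => intVV p q u v v']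
      refine Finset.sum_congr rfl fun v' _ => ?_
      rw [integral_const_mul]
      congr 1
      rw [integral_finset_sum _ fun w₁ _ => integrable_finset_sum _ fun w₂ _ =>
        integrable_finset_sum _ fun w₁' _ => integrable_finset_sum _ fun w₂' _ =>
          intW p q v v' w₁ w₂ w₁' w₂']
      refine Finset.sum_congr rfl fun w₁ _ => ?_
      rw [integral_finset_sum _ fun w₂ _ => integrable_finset_sum _ fun w₁' _ =>
        integrable_finset_sum _ fun w₂' _ => intW p q v v' w₁ w₂ w₁' w₂']
      refine Finset.sum_congr rfl fun w₂ _ => ?_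
      rw [integral_finset_sum _ fun w₁' _ => integrable_finset_sum _ fun w₂' _ =>
        intW p q v v' w₁ w₂ w₁' w₂']
      refine Finset.sum_congr rfl fun w₁' _ => ?_
      rw [integral_finset_sum _ fun w₂' _ => intW p q v v' w₁ w₂ w₁' w₂']
      refine Finset.sum_congr rfl fun w₂' _ => ?_
      simp only [mul_assoc]
      rw [integral_const_mul, integral_const_mul, integral_const_mul, integral_const_mul]
    rw [heq]
    -- bound each integral by the delta + ε
    have hID : ∀ w₁ w₂ w₁' w₂' : ZMod n,
        (∫ x, k x (w₁ - p) (w₁' - p) * k x (w₂ - q) (w₂' - q) ∂μ) ≤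
          (if w₁ = w₁' ∧ w₂ = w₂' then (1 : ℝ) else 0) + ε := by
      intro w₁ w₂ w₁' w₂'
      by_cases h : w₁ = w₁' ∧ w₂ = w₂'
      · obtain ⟨h1, h2⟩ := h
        subst h1; subst h2
        rw [if_pos ⟨rfl, rfl⟩]
        have := hdiag (w₁ - p) (w₂ - q)
        linarith
      · rw [if_neg h, zero_add]
        refine hoff _ _ _ _ ?_
        rcases not_and_or.mp h with h1 | h2
        · exact Or.inl fun hh => h1 (by rwa [sub_left_inj] at hh)
        · exact Or.inr fun hh => h2 (by rwa [sub_left_inj] at hh)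
    have hle : (∑ u : ZMod n, ∑ v : ZMod n, ∑ v' : ZMod n,
          h₂ (u - v) * h₂ (u - v') *
            ∑ w₁ : ZMod n, ∑ w₂ : ZMod n, ∑ w₁' : ZMod n, ∑ w₂' : ZMod n,
              h₁ (v - w₁) * h₁ (v - w₂) * h₁ (v' - w₁') * h₁ (v' - w₂') *
                (∫ x, k x (w₁ - p) (w₁' - p) * k x (w₂ - q) (w₂' - q) ∂μ)) ≤
        ∑ u : ZMod n, ∑ v : ZMod n, ∑ v' : ZMod n,
          h₂ (u - v) * h₂ (u - v') *
            ∑ w₁ : ZMod n, ∑ w₂ : ZMod n, ∑ w₁' : ZMod n, ∑ w₂' : ZMod n,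
              h₁ (v - w₁) * h₁ (v - w₂) * h₁ (v' - w₁') * h₁ (v' - w₂') *
                ((if w₁ = w₁' ∧ w₂ = w₂' then (1 : ℝ) else 0) + ε) := by
      refine Finset.sum_le_sum fun u _ => Finset.sum_le_sum fun v _ =>
        Finset.sum_le_sum fun v' _ => ?_
      refine mul_le_mul_of_nonneg_left ?_ (mul_nonneg (h₂pos _) (h₂pos _))
      refine Finset.sum_le_sum fun w₁ _ => Finset.sum_le_sum fun w₂ _ =>
        Finset.sum_le_sum fun w₁' _ => Finset.sum_le_sum fun w₂' _ => ?_
      exact mul_le_mul_of_nonneg_left (hID w₁ w₂ w₁' w₂')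
        (mul_nonneg (mul_nonneg (mul_nonneg (h₁pos _) (h₁pos _)) (h₁pos _)) (h₁pos _))
    refine le_trans hle (le_of_eq ?_)
    -- now a purely algebraic identity
    have step1 : ∀ v v' : ZMod n,
        (∑ w₁ : ZMod n, ∑ w₂ : ZMod n, ∑ w₁' : ZMod n, ∑ w₂' : ZMod n,
          h₁ (v - w₁) * h₁ (v - w₂) * h₁ (v' - w₁') * h₁ (v' - w₂') *
            ((if w₁ = w₁' ∧ w₂ = w₂' then (1 : ℝ) else 0) + ε)) =
        (∑ w₁ : ZMod n, ∑ w₂ : ZMod n,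
          h₁ (v - w₁) * h₁ (v - w₂) * h₁ (v' - w₁) * h₁ (v' - w₂)) + ε := by
      intro v v'
      simp only [mul_add, Finset.sum_add_distrib]
      congr 1
      · refine Finset.sum_congr rfl fun w₁ _ => Finset.sum_congr rfl fun w₂ _ => ?_
        have inner : ∀ w₁' : ZMod n, (∑ w₂' : ZMod n,
            h₁ (v - w₁) * h₁ (v - w₂) * h₁ (v' - w₁') * h₁ (v' - w₂') *
              (if w₁ = w₁' ∧ w₂ = w₂' then (1 : ℝ) else 0)) =
            if w₁ = w₁' then h₁ (v - w₁) * h₁ (v - w₂) * h₁ (v' - w₁') * h₁ (v' - w₂) else 0 := by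
          intro w₁'
          by_cases h : w₁ = w₁'
          · simp only [h, true_and, if_true]
            simp [mul_ite, mul_one, mul_zero, Finset.sum_ite_eq]
          · simp [h]
        rw [Finset.sum_congr rfl fun w₁' _ => inner w₁']
        simp [Finset.sum_ite_eq]
      · -- ε part collapses to ε
        have pull : ∀ (z : ZMod n) (c : ℝ), (∑ w : ZMod n, c * h₁ (z - w)) = c := by
          intro z c
          rw [← Finset.mul_sum, hsum1 z, mul_one]
        calc (∑ w₁ : ZMod n, ∑ w₂ : ZMod n, ∑ w₁' : ZMod n, ∑ w₂' : ZMod n,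
              h₁ (v - w₁) * h₁ (v - w₂) * h₁ (v' - w₁') * h₁ (v' - w₂') * ε)
            = ∑ w₁ : ZMod n, ∑ w₂ : ZMod n, ∑ w₁' : ZMod n,
                h₁ (v - w₁) * h₁ (v - w₂) * h₁ (v' - w₁') * ε := by
              refine Finset.sum_congr rfl fun w₁ _ => Finset.sum_congr rfl fun w₂ _ =>
                Finset.sum_congr rfl fun w₁' _ => ?_
              rw [Finset.sum_congr rfl fun w₂' (_ : w₂' ∈ Finset.univ) =>
                (by ring : h₁ (v - w₁) * h₁ (v - w₂) * h₁ (v' - w₁') * h₁ (v' - w₂') * ε =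
                  (h₁ (v - w₁) * h₁ (v - w₂) * h₁ (v' - w₁') * ε) * h₁ (v' - w₂'))]
              exact pull v' _
          _ = ∑ w₁ : ZMod n, ∑ w₂ : ZMod n, h₁ (v - w₁) * h₁ (v - w₂) * ε := by
              refine Finset.sum_congr rfl fun w₁ _ => Finset.sum_congr rfl fun w₂ _ => ?_
              rw [Finset.sum_congr rfl fun w₁' (_ : w₁' ∈ Finset.univ) =>
                (by ring : h₁ (v - w₁) * h₁ (v - w₂) * h₁ (v' - w₁') * ε =
                  (h₁ (v - w₁) * h₁ (v - w₂) * ε) * h₁ (v' - w₁'))]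
              exact pull v' _
          _ = ∑ w₁ : ZMod n, h₁ (v - w₁) * ε := by
              refine Finset.sum_congr rfl fun w₁ _ => ?_
              rw [Finset.sum_congr rfl fun w₂ (_ : w₂ ∈ Finset.univ) =>
                (by ring : h₁ (v - w₁) * h₁ (v - w₂) * ε =
                  (h₁ (v - w₁) * ε) * h₁ (v - w₂))]
              exact pull v _
          _ = ε := by
              rw [Finset.sum_congr rfl fun w₁ (_ : w₁ ∈ Finset.univ) =>
                (mul_comm (h₁ (v - w₁)) ε)]
              exact pull v ε
    have hB : ∀ v v' : ZMod n,
        (∑ w₁ : ZMod n, ∑ w₂ : ZMod n,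
          h₁ (v - w₁) * h₁ (v - w₂) * h₁ (v' - w₁) * h₁ (v' - w₂)) =
        (∑ a : ZMod n, h₁ a * h₁ (a - (v - v'))) ^ 2 := by
      intro v v'
      have e1 : (∑ w : ZMod n, h₁ (v - w) * h₁ (v' - w)) =
          ∑ a : ZMod n, h₁ a * h₁ (a - (v - v')) := by
        refine Fintype.sum_equiv (Equiv.subLeft v) _ _ fun w => ?_
        simp only [Equiv.subLeft_apply]
        have : v - w - (v - v') = v' - w := by ring
        rw [this]
      rw [← e1, sq, Finset.sum_mul_sum]
      exact Finset.sum_congr rfl fun w₁ _ => Finset.sum_congr rfl fun w₂ _ => by ring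
    have hcv : ∀ F : ZMod n → ℝ,
        (∑ u : ZMod n, ∑ v : ZMod n, ∑ v' : ZMod n,
          h₂ (u - v) * h₂ (u - v') * F (v - v')) =
        (n : ℝ) * ∑ r : ZMod n, (∑ a : ZMod n, h₂ a * h₂ (a - r)) * F r := by
      intro F
      have huv : ∀ u : ZMod n, (∑ v : ZMod n, ∑ v' : ZMod n,
          h₂ (u - v) * h₂ (u - v') * F (v - v')) =
          ∑ r : ZMod n, (∑ a : ZMod n, h₂ a * h₂ (a - r)) * F r := by
        intro u
        calc (∑ v : ZMod n, ∑ v' : ZMod n, h₂ (u - v) * h₂ (u - v') * F (v - v'))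
            = ∑ v : ZMod n, ∑ a : ZMod n, h₂ (u - v) * h₂ a * F (v - (u - a)) := by
              refine Finset.sum_congr rfl fun v _ => ?_
              refine Fintype.sum_equiv (Equiv.subLeft u) _ _ fun v' => ?_
              simp only [Equiv.subLeft_apply]
              have : v - (u - (u - v')) = v - v' := by ring
              rw [this]
          _ = ∑ a : ZMod n, ∑ v : ZMod n, h₂ (u - v) * h₂ a * F (v - (u - a)) :=
              Finset.sum_comm
          _ = ∑ a : ZMod n, ∑ r : ZMod n, h₂ (a - r) * h₂ a * F r := by
              refine Finset.sum_congr rfl fun a _ => ?_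
              refine Fintype.sum_equiv (Equiv.subRight (u - a)) _ _ fun v => ?_
              simp only [Equiv.subRight_apply]
              have : a - (v - (u - a)) = u - v := by ring
              rw [this]
          _ = ∑ r : ZMod n, ∑ a : ZMod n, h₂ (a - r) * h₂ a * F r := Finset.sum_comm
          _ = ∑ r : ZMod n, (∑ a : ZMod n, h₂ a * h₂ (a - r)) * F r := by
              refine Finset.sum_congr rfl fun r _ => ?_
              rw [Finset.sum_mul]
              exact Finset.sum_congr rfl fun a _ => by ring
      rw [Finset.sum_congr rfl fun u _ => huv u, Finset.sum_const, Finset.card_univ,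
        ZMod.card, nsmul_eq_mul]
    have hA1 : (∑ r : ZMod n, ∑ a : ZMod n, h₂ a * h₂ (a - r)) = 1 := by
      rw [Finset.sum_comm]
      calc (∑ a : ZMod n, ∑ r : ZMod n, h₂ a * h₂ (a - r))
          = ∑ a : ZMod n, h₂ a * ∑ r : ZMod n, h₂ (a - r) := by
            simp [Finset.mul_sum]
        _ = ∑ a : ZMod n, h₂ a * 1 := Finset.sum_congr rfl fun a _ => by rw [hsum2 a]
        _ = 1 := by simp [h₂sum]
    calc (∑ u : ZMod n, ∑ v : ZMod n, ∑ v' : ZMod n,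
          h₂ (u - v) * h₂ (u - v') *
            ∑ w₁ : ZMod n, ∑ w₂ : ZMod n, ∑ w₁' : ZMod n, ∑ w₂' : ZMod n,
              h₁ (v - w₁) * h₁ (v - w₂) * h₁ (v' - w₁') * h₁ (v' - w₂') *
                ((if w₁ = w₁' ∧ w₂ = w₂' then (1 : ℝ) else 0) + ε))
        = ∑ u : ZMod n, ∑ v : ZMod n, ∑ v' : ZMod n,
            h₂ (u - v) * h₂ (u - v') *
              ((∑ a : ZMod n, h₁ a * h₁ (a - (v - v'))) ^ 2 + ε) := by
          refine Finset.sum_congr rfl fun u _ => Finset.sum_congr rfl fun v _ =>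
            Finset.sum_congr rfl fun v' _ => ?_
          rw [step1 v v', hB v v']
      _ = (n : ℝ) * ∑ r : ZMod n, (∑ a : ZMod n, h₂ a * h₂ (a - r)) *
            ((∑ a : ZMod n, h₁ a * h₁ (a - r)) ^ 2 + ε) :=
          hcv (fun r => (∑ a : ZMod n, h₁ a * h₁ (a - r)) ^ 2 + ε)
      _ = (n : ℝ) * ((∑ r : ZMod n, (∑ a : ZMod n, h₂ a * h₂ (a - r)) *
            (∑ a : ZMod n, h₁ a * h₁ (a - r)) ^ 2) + ε) := by
          congr 1
          simp only [mul_add, Finset.sum_add_distrib]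
          congr 1
          rw [← Finset.sum_mul, hA1, one_mul]
  -- assemble
  calc (∫ x, (∑ p ∈ S₂, ∑ q ∈ S₂, ∑ u : ZMod n, ∑ v : ZMod n, ∑ v' : ZMod n,
        h₂ (u - v) * h₂ (u - v') *
          ∑ w₁ : ZMod n, ∑ w₂ : ZMod n, ∑ w₁' : ZMod n, ∑ w₂' : ZMod n,
            h₁ (v - w₁) * h₁ (v - w₂) * h₁ (v' - w₁') * h₁ (v' - w₂') *
              k x (w₁ - p) (w₁' - p) * k x (w₂ - q) (w₂' - q)) ∂μ)
      = ∑ p ∈ S₂, ∑ q ∈ S₂, ∫ x, (∑ u : ZMod n, ∑ v : ZMod n, ∑ v' : ZMod n,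
        h₂ (u - v) * h₂ (u - v') *
          ∑ w₁ : ZMod n, ∑ w₂ : ZMod n, ∑ w₁' : ZMod n, ∑ w₂' : ZMod n,
            h₁ (v - w₁) * h₁ (v - w₂) * h₁ (v' - w₁') * h₁ (v' - w₂') *
              k x (w₁ - p) (w₁' - p) * k x (w₂ - q) (w₂' - q)) ∂μ := by
        rw [integral_finset_sum _ fun p _ => integrable_finset_sum _ fun q _ => intInner p q]
        exact Finset.sum_congr rfl fun p _ =>
          integral_finset_sum _ fun q _ => intInner p q
    _ ≤ ∑ p ∈ S₂, ∑ q ∈ S₂, (n : ℝ) * ((∑ r : ZMod n, (∑ a : ZMod n, h₂ a * h₂ (a - r)) *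
            (∑ a : ZMod n, h₁ a * h₁ (a - r)) ^ 2) + ε) :=
        Finset.sum_le_sum fun p _ => Finset.sum_le_sum fun q _ => main p q
    _ = (s : ℝ) ^ 2 * n * ((∑ r : ZMod n, (∑ a : ZMod n, h₂ a * h₂ (a - r)) *
            (∑ a : ZMod n, h₁ a * h₁ (a - r)) ^ 2) + ε) := by
        simp only [Finset.sum_const, hcard, nsmul_eq_mul]
        ring
end

section
/- Let n ≥ 1 and D ≥ 0 be integers, X a set, Φ : X → ZMod n → (Fin D → ℝ) any map, h₁, h₂, h₃ : ZMod n → ℝ, and S₂, S₃ finite subsets of ZMod n. Define B(x)(u) := Σ_{v ∈ ZMod n} h₁(u − v)·Φ(x)(v) ∈ ℝ^D; C(x)(a)(q,r) := Σ_{u ∈ ZMod n} h₂(a − u)·(B(x)(u + q)) ⊗ (B(x)(u + r)) ∈ Matrix (Fin D) (Fin D) ℝ for q, r ∈ S₂; and, for α = (p,q,r,p',q',r') ∈ S₃ × S₂ × S₂ × S₃ × S₂ × S₂, the third-layer feature map Ψ(x)(s)(α) := Σ_{t ∈ ZMod n} h₃(s − t)·(C(x)(t + p)(q,r)) ⊗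 (C(x)(t + p')(q',r')), an order-4 tensor in Fin D → Fin D → Fin D → Fin D → ℝ with entries Ψ(x)(s)(α)(i,j,k,l) = Σ_t h₃(s − t)·C(x)(t+p)(q,r)(i,j)·C(x)(t+p')(q',r')(k,l). Then for every F assigning to each s ∈ ZMod n and each α an order-4 tensor F(s)(α) : Fin D → Fin D → Fin D → Fin D → ℝ, and every x ∈ X: Σ_{s ∈ ZMod n} Σ_{α} Σ_{i,j,k,l ∈ Fin D} F(s)(α)(i,j,k,l)·Ψ(x)(s)(α)(i,j,k,l) = Σ_{α} Σ_{u₁,u₂,u₃,u₄ ∈ ZMod n} Σ_{i,j,k,l ∈ Fin D} G_α(u₁,u₂,u₃,u₄)(i,j,k,l)·Φ(x)(u₁)(i)·Φ(x)(u₂)(j)·Φ(x)(u₃)(k)·Φ(x)(u₄)(l), where G_α(u₁,u₂,u₃,u₄) := Σ_{s,t,a,b ∈ ZMod n} h₃(s − t)·h₂(t + p − a)·h₂(t + p' − b)·h₁(a + q − u₁)·h₁(a + r − u₂)·h₁(b + q' − u₃)·h₁(b + r' − u₄)·F(s)(α). -/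
lemma c12 {M : Type*} [AddCommMonoid M]
    {α₁ α₂ α₃ α₄ α₅ α₆ α₇ α₈ α₉ α₁₀ α₁₁ α₁₂ : Type*}
    [Fintype α₁] [Fintype α₂] [Fintype α₃] [Fintype α₄] [Fintype α₅] [Fintype α₆]
    [Fintype α₇] [Fintype α₈] [Fintype α₉] [Fintype α₁₀] [Fintype α₁₁] [Fintype α₁₂]
    (f : α₁ → α₂ → α₃ → α₄ → α₅ → α₆ → α₇ → α₈ → α₉ → α₁₀ → α₁₁ → α₁₂ → M) :
    (∑ x₁, ∑ x₂, ∑ x₃, ∑ x₄, ∑ x₅, ∑ x₆, ∑ x₇, ∑ x₈, ∑ x₉, ∑ x₁₀, ∑ x₁₁, ∑ x₁₂,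
      f x₁ x₂ x₃ x₄ x₅ x₆ x₇ x₈ x₉ x₁₀ x₁₁ x₁₂) =
    ∑ x : α₁ × α₂ × α₃ × α₄ × α₅ × α₆ × α₇ × α₈ × α₉ × α₁₀ × α₁₁ × α₁₂,
      f x.1 x.2.1 x.2.2.1 x.2.2.2.1 x.2.2.2.2.1 x.2.2.2.2.2.1 x.2.2.2.2.2.2.1
        x.2.2.2.2.2.2.2.1 x.2.2.2.2.2.2.2.2.1 x.2.2.2.2.2.2.2.2.2.1
        x.2.2.2.2.2.2.2.2.2.2.1 x.2.2.2.2.2.2.2.2.2.2.2 := by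
  simp only [Fintype.sum_prod_type]

set_option maxHeartbeats 2000000 in
lemma key (n : ℕ) [NeZero n] (D : ℕ)
    (Φ' : ZMod n → Fin D → ℝ) (h₁ h₂ h₃ : ZMod n → ℝ) (p q r p' q' r' : ZMod n)
    (Fα : ZMod n → Fin D → Fin D → Fin D → Fin D → ℝ) :
    (∑ s : ZMod n, ∑ i : Fin D, ∑ j : Fin D, ∑ k : Fin D, ∑ l : Fin D,
      Fα s i j k l *
        ∑ t : ZMod n, h₃ (s - t) *
          ((∑ a : ZMod n, h₂ (t + p - a) *
              ((∑ v : ZMod n, h₁ (a + q - v) * Φ' v i) * (∑ v : ZMod n, h₁ (a + r - v) * Φ' v j))) *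
           (∑ b : ZMod n, h₂ (t + p' - b) *
              ((∑ v : ZMod n, h₁ (b + q' - v) * Φ' v k) * (∑ v : ZMod n, h₁ (b + r' - v) * Φ' v l))))) =
    ∑ u₁ : ZMod n, ∑ u₂ : ZMod n, ∑ u₃ : ZMod n, ∑ u₄ : ZMod n,
      ∑ i : Fin D, ∑ j : Fin D, ∑ k : Fin D, ∑ l : Fin D,
        (∑ s : ZMod n, ∑ t : ZMod n, ∑ a : ZMod n, ∑ b : ZMod n,
          h₃ (s - t) * h₂ (t + p - a) * h₂ (t + p' - b) * h₁ (a + q - u₁) *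
            h₁ (a + r - u₂) * h₁ (b + q' - u₃) * h₁ (b + r' - u₄) * Fα s i j k l) *
          Φ' u₁ i * Φ' u₂ j * Φ' u₃ k * Φ' u₄ l := by
  simp (config := { maxSteps := 10000000 }) only [Finset.mul_sum, Finset.sum_mul]
  rw [c12, c12]
  refine Fintype.sum_equiv
    ⟨fun x => (x.2.2.2.2.2.2.2.2.2.2.2, x.2.2.2.2.2.2.2.2.2.2.1, x.2.2.2.2.2.2.2.2.1,
        x.2.2.2.2.2.2.2.1, x.2.1, x.2.2.1, x.2.2.2.1, x.2.2.2.2.1, x.1, x.2.2.2.2.2.1,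
        x.2.2.2.2.2.2.2.2.2.1, x.2.2.2.2.2.2.1),
     fun y => (y.2.2.2.2.2.2.2.2.1, y.2.2.2.2.1, y.2.2.2.2.2.1, y.2.2.2.2.2.2.1,
        y.2.2.2.2.2.2.2.1, y.2.2.2.2.2.2.2.2.2.1, y.2.2.2.2.2.2.2.2.2.2.2, y.2.2.2.1,
        y.2.2.1, y.2.2.2.2.2.2.2.2.2.2.1, y.2.1, y.1),
     fun _ => rfl, fun _ => rfl⟩ _ _ (fun x => ?_)
  obtain ⟨s, i, j, k, l, t, b, u₄, u₃, a, u₂, u₁⟩ := x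
  simp only [Equiv.coe_fn_mk]
  ring


/-- **Proposition 5 (representation half): RKHS of the 3-layer CKN with quadratic
`k₂`, `k₃`.** Every linear functional `⟪F, Ψ x⟫` of the three-layer feature map is an
additive model of order-4 interaction terms between four patches of the input, with
coefficient tensors `G_α` obtained from `F` through the pooling filters `h₁, h₂, h₃`. -/
theorem three_layer_ckn_quadratic_representation
    (n : ℕ) [NeZero n] (D : ℕ) {X : Type*}
    (Φ : X → ZMod n → Fin D → ℝ) (h₁ h₂ h₃ : ZMod n → ℝ)
    (S₂ S₃ : Finset (ZMod n))
    (F : ZMod n → ZMod n → ZMod n → ZMod n → ZMod n → ZMod n → ZMod n →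
      Fin D → Fin D → Fin D → Fin D → ℝ) (x : X) :
    let B : ZMod n → Fin D → ℝ := fun u i => ∑ v : ZMod n, h₁ (u - v) * Φ x v i
    let C : ZMod n → ZMod n → ZMod n → Fin D → Fin D → ℝ := fun a q r i j =>
      ∑ u : ZMod n, h₂ (a - u) * (B (u + q) i * B (u + r) j)
    let Ψ : ZMod n → ZMod n → ZMod n → ZMod n → ZMod n → ZMod n → ZMod n →
        Fin D → Fin D → Fin D → Fin D → ℝ := fun s p q r p' q' r' i j k l =>
      ∑ t : ZMod n, h₃ (s - t) * (C (t + p) q r i j * C (t + p') q' r' k l)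
    let G : ZMod n → ZMod n → ZMod n → ZMod n → ZMod n → ZMod n →
        ZMod n → ZMod n → ZMod n → ZMod n →
        Fin D → Fin D → Fin D → Fin D → ℝ := fun p q r p' q' r' u₁ u₂ u₃ u₄ i j k l =>
      ∑ s : ZMod n, ∑ t : ZMod n, ∑ a : ZMod n, ∑ b : ZMod n,
        h₃ (s - t) * h₂ (t + p - a) * h₂ (t + p' - b) * h₁ (a + q - u₁) *
          h₁ (a + r - u₂) * h₁ (b + q' - u₃) * h₁ (b + r' - u₄) *
          F s p q r p' q' r' i j k l
    (∑ s : ZMod n, ∑ p ∈ S₃, ∑ q ∈ S₂, ∑ r ∈ S₂, ∑ p' ∈ S₃, ∑ q' ∈ S₂, ∑ r' ∈ S₂,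
        ∑ i : Fin D, ∑ j : Fin D, ∑ k : Fin D, ∑ l : Fin D,
          F s p q r p' q' r' i j k l * Ψ s p q r p' q' r' i j k l) =
      ∑ p ∈ S₃, ∑ q ∈ S₂, ∑ r ∈ S₂, ∑ p' ∈ S₃, ∑ q' ∈ S₂, ∑ r' ∈ S₂,
        ∑ u₁ : ZMod n, ∑ u₂ : ZMod n, ∑ u₃ : ZMod n, ∑ u₄ : ZMod n,
          ∑ i : Fin D, ∑ j : Fin D, ∑ k : Fin D, ∑ l : Fin D,
            G p q r p' q' r' u₁ u₂ u₃ u₄ i j k l *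
              Φ x u₁ i * Φ x u₂ j * Φ x u₃ k * Φ x u₄ l := by
  intro B C Ψ G
  rw [Finset.sum_comm]
  refine Finset.sum_congr rfl fun p _ => ?_
  rw [Finset.sum_comm]
  refine Finset.sum_congr rfl fun q _ => ?_
  rw [Finset.sum_comm]
  refine Finset.sum_congr rfl fun r _ => ?_
  rw [Finset.sum_comm]
  refine Finset.sum_congr rfl fun p' _ => ?_
  rw [Finset.sum_comm]
  refine Finset.sum_congr rfl fun q' _ => ?_
  rw [Finset.sum_comm]
  refine Finset.sum_congr rfl fun r' _ => ?_
  exact key n D (Φ x) h₁ h₂ h₃ p q r p' q' r' (fun s => F s p q r p' q' r')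
end

section
/- Let n ≥ 1 be an integer, (Z, 𝒜, μ) a probability space, I a type, and Y : I → Z → ℂ a family of square-integrable functions satisfying: ∫ Y_i(z)·conj(Y_j(z)) dμ(z) = 1 if i = j and 0 if i ≠ j, and ∫ Y_i(z) dμ(z) = 0 for every i ∈ I. On the product space Z^{ZMod n} equipped with the product measure μ^{⊗ ZMod n}, define for each w ∈ ZMod n and i ∈ I the function φ_{w,i}(z) := n^{−1/2} · Σ_{u ∈ ZMod n} exp(2πi·w.val·u.val/n) · Y_i(z(u)). Then the family {φ_{w,i} : w ∈ ZMod n, i ∈ I} is orthonormal in L²(μ^{⊗ ZMod n}): ∫ φ_{w,i}·conj(φ_{w',i'}) d(μ^{⊗ ZMod n}) = 1 if (w,i) = (w',i') and 0 otherwise; moreover each φ_{w,i} is orthogonal to the constant function 1, i.e. ∫ φ_{w,i} d(μ^{⊗ ZMod n}) = 0. -/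
open MeasureTheory

section CknAux

open Function Set

lemma ckn_char_sum (n : ℕ) [NeZero n] (w w' : ZMod n) :
    (∑ u : ZMod n,
      Complex.exp (2 * Real.pi * Complex.I * (w.val : ℂ) * (u.val : ℂ) / (n : ℂ)) *
      (starRingEnd ℂ)
        (Complex.exp (2 * Real.pi * Complex.I * (w'.val : ℂ) * (u.val : ℂ) / (n : ℂ))))
      = if w = w' then (n : ℂ) else 0 := by
  have hn : (n : ℂ) ≠ 0 := Nat.cast_ne_zero.mpr (NeZero.ne n)
  have h2pi : (2 * (Real.pi : ℂ) * Complex.I) ≠ 0 := by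
    simp [Real.pi_ne_zero, Complex.I_ne_zero, Complex.ofReal_ne_zero]
  have hterm : ∀ u : ZMod n,
      Complex.exp (2 * Real.pi * Complex.I * (w.val : ℂ) * (u.val : ℂ) / (n : ℂ)) *
      (starRingEnd ℂ)
        (Complex.exp (2 * Real.pi * Complex.I * (w'.val : ℂ) * (u.val : ℂ) / (n : ℂ)))
        = Complex.exp (2 * Real.pi * Complex.I * (((w.val : ℂ) - (w'.val : ℂ)) / (n : ℂ)))
            ^ u.val := by
    intro u
    rw [← Complex.exp_conj, ← Complex.exp_add, ← Complex.exp_nat_mul]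
    congr 1
    simp only [map_div₀, map_mul, Complex.conj_I, Complex.conj_ofReal, map_natCast, map_ofNat]
    rw [← add_div, ← mul_div_assoc]
    congr 1
    ring
  simp only [hterm]
  have hrange : ∑ u : ZMod n,
      Complex.exp (2 * Real.pi * Complex.I * (((w.val : ℂ) - (w'.val : ℂ)) / (n : ℂ))) ^ u.val
      = ∑ k ∈ Finset.range n,
      Complex.exp (2 * Real.pi * Complex.I * (((w.val : ℂ) - (w'.val : ℂ)) / (n : ℂ))) ^ k := by
    obtain ⟨m, rfl⟩ := Nat.exists_eq_succ_of_ne_zero (NeZero.ne n)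
    exact Fin.sum_univ_eq_sum_range _ (m + 1)
  rw [hrange]
  rcases eq_or_ne w w' with rfl | hww
  · simp
  · rw [if_neg hww]
    have hz1 : Complex.exp (2 * Real.pi * Complex.I * (((w.val : ℂ) - (w'.val : ℂ)) / (n : ℂ)))
        ≠ 1 := by
      intro h
      rw [Complex.exp_eq_one_iff] at h
      obtain ⟨k, hk⟩ := h
      rw [mul_comm (k : ℂ)] at hk
      have h1 : ((w.val : ℂ) - (w'.val : ℂ)) / (n : ℂ) = (k : ℂ) :=
        mul_left_cancel₀ h2pi hk
      have h2 : ((w.val : ℂ) - (w'.val : ℂ)) = (k : ℂ) * n := (div_eq_iff hn).mp h1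
      have h3 : ((w.val : ℤ) - (w'.val : ℤ)) = k * n := by
        have := h2
        push_cast at this ⊢
        exact_mod_cast this
      have hdvd : (n : ℤ) ∣ ((w.val : ℤ) - (w'.val : ℤ)) := ⟨k, by linarith [h3]⟩
      have : ((((w.val : ℤ) - (w'.val : ℤ)) : ℤ) : ZMod n) = 0 :=
        (ZMod.intCast_zmod_eq_zero_iff_dvd _ _).mpr hdvd
      push_cast at this
      rw [ZMod.natCast_val, ZMod.natCast_val, ZMod.cast_id, ZMod.cast_id, sub_eq_zero] at this
      exact hww this
    rw [geom_sum_eq hz1]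
    have hpow : Complex.exp (2 * Real.pi * Complex.I * (((w.val : ℂ) - (w'.val : ℂ)) / (n : ℂ)))
        ^ n = 1 := by
      rw [← Complex.exp_nat_mul]
      obtain ⟨m, hm⟩ : ∃ m : ℤ, (m : ℂ) = (w.val : ℂ) - (w'.val : ℂ) :=
        ⟨(w.val : ℤ) - (w'.val : ℤ), by push_cast; ring⟩
      have : (n : ℂ) * (2 * Real.pi * Complex.I * (((w.val : ℂ) - (w'.val : ℂ)) / (n : ℂ)))
          = (m : ℂ) * (2 * Real.pi * Complex.I) := by
        rw [hm, mul_comm ((n : ℂ)), mul_assoc, div_mul_cancel₀ _ hn, mul_comm]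
      rw [this]
      exact Complex.exp_int_mul_two_pi_mul_I m
    rw [hpow]
    simp

variable {ι : Type*} [Fintype ι] [DecidableEq ι] {Z : Type*} [MeasurableSpace Z]
  (μ : Measure Z) [IsProbabilityMeasure μ]

lemma ckn_map_eval (u : ι) : (Measure.pi fun _ : ι => μ).map (Function.eval u) = μ := by
  ext s hs
  rw [Measure.map_apply (measurable_pi_apply u) hs, Set.eval_preimage, Measure.pi_pi]
  rw [Finset.prod_eq_single u (fun j _ hj => by simp [Function.update_of_ne hj])
    (fun h => absurd (Finset.mem_univ u) h)]
  simp

lemma ckn_measurePreserving_eval (u : ι) :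
    MeasurePreserving (Function.eval u) (Measure.pi fun _ : ι => μ) μ :=
  ⟨measurable_pi_apply u, ckn_map_eval μ u⟩

lemma ckn_integral_eval (f : Z → ℂ) (hf : AEStronglyMeasurable f μ) (u : ι) :
    ∫ z : ι → Z, f (z u) ∂(Measure.pi fun _ : ι => μ) = ∫ x, f x ∂μ :=
  calc ∫ z : ι → Z, f (z u) ∂(Measure.pi fun _ : ι => μ)
      = ∫ x, f x ∂((Measure.pi fun _ : ι => μ).map (Function.eval u)) :=
        (integral_map (measurable_pi_apply u).aemeasurable
          ((ckn_map_eval μ u).symm ▸ hf)).symm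
    _ = ∫ x, f x ∂μ := by rw [ckn_map_eval]

lemma ckn_map_pair {u v : ι} (huv : u ≠ v) :
    (Measure.pi fun _ : ι => μ).map (fun z => (z u, z v)) = μ.prod μ := by
  refine (Measure.prod_eq (μ := μ) (ν := μ) fun s t hs ht => ?_).symm
  rw [Measure.map_apply ((measurable_pi_apply u).prodMk (measurable_pi_apply v)) (hs.prod ht)]
  have hpre : (fun z : ι → Z => (z u, z v)) ⁻¹' (s ×ˢ t)
      = Set.pi Set.univ (Function.update (Function.update (fun _ => Set.univ) u s) v t) := by
    ext z
    simp only [Set.mem_preimage, Set.mem_prod, Set.mem_univ_pi]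
    constructor
    · rintro ⟨h1, h2⟩ j
      rcases eq_or_ne j v with rfl | hjv
      · simpa using h2
      rcases eq_or_ne j u with rfl | hju
      · rw [Function.update_of_ne hjv, Function.update_self]; exact h1
      · simp [Function.update_of_ne hjv, Function.update_of_ne hju]
    · intro h
      have h1 := h u; have h2 := h v
      rw [Function.update_of_ne huv, Function.update_self] at h1
      rw [Function.update_self] at h2
      exact ⟨h1, h2⟩
  rw [hpre, Measure.pi_pi]
  have hμ : ∀ j, μ (Function.update (Function.update (fun _ => (Set.univ : Set Z)) u s) v t j)
      = Function.update (Function.update (fun _ : ι => (1 : ENNReal)) u (μ s)) v (μ t) j := by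
    intro j
    rcases eq_or_ne j v with rfl | hjv
    · simp
    rcases eq_or_ne j u with rfl | hju
    · simp [Function.update_of_ne hjv]
    · simp [Function.update_of_ne hjv, Function.update_of_ne hju]
  rw [Finset.prod_congr rfl fun j _ => hμ j,
    Finset.prod_update_of_mem (Finset.mem_univ v),
    Finset.prod_update_of_mem (Finset.mem_sdiff.mpr ⟨Finset.mem_univ u, by simp [huv]⟩)]
  simp [mul_comm]

lemma ckn_integral_pair (f g : Z → ℂ) (hf : AEStronglyMeasurable f μ)
    (hg : AEStronglyMeasurable g μ) {u v : ι} (huv : u ≠ v) :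
    ∫ z : ι → Z, f (z u) * g (z v) ∂(Measure.pi fun _ : ι => μ)
      = (∫ x, f x ∂μ) * ∫ x, g x ∂μ := by
  have hmap := ckn_map_pair μ huv
  have hF : AEStronglyMeasurable (fun p : Z × Z => f p.1 * g p.2) (μ.prod μ) :=
    (hf.comp_quasiMeasurePreserving Measure.quasiMeasurePreserving_fst).mul
      (hg.comp_quasiMeasurePreserving Measure.quasiMeasurePreserving_snd)
  calc ∫ z : ι → Z, f (z u) * g (z v) ∂(Measure.pi fun _ : ι => μ)
      = ∫ p, f p.1 * g p.2 ∂((Measure.pi fun _ : ι => μ).map fun z => (z u, z v)) :=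
        (integral_map (φ := fun z : ι → Z => (z u, z v))
          (f := fun p : Z × Z => f p.1 * g p.2)
          (((measurable_pi_apply u).prodMk (measurable_pi_apply v)).aemeasurable)
          (hmap ▸ hF)).symm
    _ = ∫ p, f p.1 * g p.2 ∂(μ.prod μ) := by rw [hmap]
    _ = _ := integral_prod_mul f g

end CknAux

/-- **Orthonormal family for the one-layer CKN under i.i.d. patches (Appendix D).**
If `{Y_i}` are mean-zero orthonormal square-integrable functions on a probability space
`(Z, μ)`, then on the product space `ZMod n → Z` with product measure the functions
`φ_{w,i}(z) = n^{-1/2} ∑_u e^{2πi w u / n} Y_i(z u)` form an orthonormal family, each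
orthogonal to the constants. -/
theorem ckn_fourier_orthonormal_family
    (n : ℕ) [NeZero n] {Z : Type*} [MeasurableSpace Z] (μ : Measure Z)
    [IsProbabilityMeasure μ] {I : Type*} [DecidableEq I] (Y : I → Z → ℂ)
    (hL2 : ∀ i, MemLp (Y i) 2 μ)
    (horth : ∀ i j, (∫ z, Y i z * (starRingEnd ℂ) (Y j z) ∂μ) =
      if i = j then 1 else 0)
    (hmean : ∀ i, (∫ z, Y i z ∂μ) = 0) :
    let φ : ZMod n → I → (ZMod n → Z) → ℂ := fun w i z =>
      ((Real.sqrt n : ℂ))⁻¹ *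
        ∑ u : ZMod n,
          Complex.exp (2 * Real.pi * Complex.I * (w.val : ℂ) * (u.val : ℂ) / (n : ℂ)) *
            Y i (z u)
    (∀ w w' : ZMod n, ∀ i i' : I,
      (∫ z, φ w i z * (starRingEnd ℂ) (φ w' i' z)
          ∂(Measure.pi fun _ : ZMod n => μ)) =
        if (w, i) = (w', i') then 1 else 0) ∧
    (∀ w : ZMod n, ∀ i : I,
      (∫ z, φ w i z ∂(Measure.pi fun _ : ZMod n => μ)) = 0) := by
  intro φ
  have hY2 : ∀ (i : I) (u : ZMod n),
      MemLp (fun z : ZMod n → Z => Y i (z u)) 2 (Measure.pi fun _ : ZMod n => μ) :=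
    fun i u => (hL2 i).comp_measurePreserving (ckn_measurePreserving_eval μ u)
  have hconjY : ∀ i, MemLp (fun x => (starRingEnd ℂ) (Y i x)) 2 μ := fun i =>
    Complex.isometry_conj.lipschitz.comp_memLp (map_zero _) (hL2 i)
  have hconjYm : ∀ i, AEStronglyMeasurable (fun x => (starRingEnd ℂ) (Y i x)) μ :=
    fun i => Complex.continuous_conj.comp_aestronglyMeasurable (hL2 i).1
  have hpqr : (1 : ENNReal) / 1 = 1 / 2 + 1 / 2 := by
    rw [ENNReal.div_add_div_same, one_add_one_eq_two,
      ENNReal.div_self two_ne_zero ENNReal.ofNat_ne_top, one_div_one]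
  have hmul_int : ∀ (i i' : I) (u v : ZMod n),
      Integrable (fun z : ZMod n → Z => Y i (z u) * (starRingEnd ℂ) (Y i' (z v)))
        (Measure.pi fun _ : ZMod n => μ) := by
    intro i i' u v
    have h2 : MemLp (fun z : ZMod n → Z => (starRingEnd ℂ) (Y i' (z v))) 2
        (Measure.pi fun _ : ZMod n => μ) :=
      (hconjY i').comp_measurePreserving (ckn_measurePreserving_eval μ v)
    rw [← memLp_one_iff_integrable]
    exact MemLp.smul (r := 1) (φ := fun z : ZMod n → Z => Y i (z u)) h2 (hY2 i u)
  constructor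
  · intro w w' i i'
    have hpt : ∀ z : ZMod n → Z,
        φ w i z * (starRingEnd ℂ) (φ w' i' z)
          = ((Real.sqrt n : ℂ))⁻¹ * ((Real.sqrt n : ℂ))⁻¹ *
            ∑ u : ZMod n, ∑ v : ZMod n,
              (Complex.exp (2 * Real.pi * Complex.I * (w.val : ℂ) * (u.val : ℂ) / (n : ℂ)) *
                (starRingEnd ℂ)
                  (Complex.exp
                    (2 * Real.pi * Complex.I * (w'.val : ℂ) * (v.val : ℂ) / (n : ℂ)))) *
              (Y i (z u) * (starRingEnd ℂ) (Y i' (z v))) := by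
      intro z
      simp only [φ, map_mul, map_sum, map_inv₀, Complex.conj_ofReal]
      rw [mul_mul_mul_comm, Finset.sum_mul_sum]
      congr 1
      refine Finset.sum_congr rfl fun u _ => Finset.sum_congr rfl fun v _ => ?_
      ring
    simp only [hpt]
    rw [integral_const_mul, integral_finset_sum _ (fun u _ =>
      integrable_finset_sum _ (fun v _ => ((hmul_int i i' u v).const_mul _)))]
    have hswap : ∀ u : ZMod n,
        (∫ z, ∑ v : ZMod n,
          (Complex.exp (2 * Real.pi * Complex.I * (w.val : ℂ) * (u.val : ℂ) / (n : ℂ)) *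
            (starRingEnd ℂ)
              (Complex.exp (2 * Real.pi * Complex.I * (w'.val : ℂ) * (v.val : ℂ) / (n : ℂ)))) *
          (Y i (z u) * (starRingEnd ℂ) (Y i' (z v))) ∂(Measure.pi fun _ : ZMod n => μ))
        = ∑ v : ZMod n,
          (Complex.exp (2 * Real.pi * Complex.I * (w.val : ℂ) * (u.val : ℂ) / (n : ℂ)) *
            (starRingEnd ℂ)
              (Complex.exp (2 * Real.pi * Complex.I * (w'.val : ℂ) * (v.val : ℂ) / (n : ℂ)))) *
          ((if u = v then (if i = i' then (1 : ℂ) else 0) else 0)) := by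
      intro u
      rw [integral_finset_sum _ (fun v _ => ((hmul_int i i' u v).const_mul _))]
      refine Finset.sum_congr rfl fun v _ => ?_
      rw [integral_const_mul]
      congr 1
      rcases eq_or_ne u v with rfl | huv
      · rw [ckn_integral_eval μ (fun x => Y i x * (starRingEnd ℂ) (Y i' x))
          ((hL2 i).1.mul (hconjYm i')) u]
        simp [horth i i']
      · rw [ckn_integral_pair μ (Y i) (fun x => (starRingEnd ℂ) (Y i' x))
          (hL2 i).1 (hconjYm i') huv, hmean i]
        simp [if_neg huv]
    simp only [hswap]
    have hsqrt : ((Real.sqrt n : ℂ))⁻¹ * ((Real.sqrt n : ℂ))⁻¹ = ((n : ℂ))⁻¹ := by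
      rw [← mul_inv, ← Complex.ofReal_mul, Real.mul_self_sqrt (Nat.cast_nonneg n)]
      norm_num
    rw [hsqrt]
    rcases eq_or_ne i i' with rfl | hii
    · simp only [if_pos rfl, mul_ite, mul_one, mul_zero, Finset.sum_ite_eq,
        Finset.mem_univ, if_true]
      rw [ckn_char_sum n w w']
      rcases eq_or_ne w w' with rfl | hww
      · simp [inv_mul_cancel₀ (show (n : ℂ) ≠ 0 from Nat.cast_ne_zero.mpr (NeZero.ne n))]
      · simp [hww, Prod.ext_iff]
    · have : ((w, i) = (w', i')) = False := by
        simp [Prod.ext_iff, hii]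
      simp [hii, this]
  · intro w i
    have hint : ∀ u : ZMod n,
        Integrable (fun z : ZMod n → Z =>
          Complex.exp (2 * Real.pi * Complex.I * (w.val : ℂ) * (u.val : ℂ) / (n : ℂ)) *
            Y i (z u)) (Measure.pi fun _ : ZMod n => μ) :=
      fun u => ((hY2 i u).integrable one_le_two).const_mul _
    simp only [φ]
    rw [integral_const_mul, integral_finset_sum _ (fun u _ => hint u)]
    have : ∀ u : ZMod n,
        (∫ z, Complex.exp (2 * Real.pi * Complex.I * (w.val : ℂ) * (u.val : ℂ) / (n : ℂ)) *
          Y i (z u) ∂(Measure.pi fun _ : ZMod n => μ)) = 0 := by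
      intro u
      rw [integral_const_mul, ckn_integral_eval μ (Y i) (hL2 i).1 u, hmean i, mul_zero]
    rw [Finset.sum_eq_zero fun u _ => this u, mul_zero]
end

section
/- Let n ≥ 1 be an integer, α > 0, C ≥ 0, λ > 0; let ℓ : Fin n → ℝ be nonnegative with mean ℓ̄ := (Σ_{w} ℓ_w)/n, and let c, μ : ℕ → ℝ be nonnegative. Assume that for every t > 0 the family (k ↦ c_k·μ_k/(t + μ_k)) is summable and Σ'_k c_k·μ_k/(t + μ_k) ≤ C·t^{−1/α}. Then the family over (w, k) ∈ Fin n × ℕ given by c_k·ℓ_w·μ_k/(λ + ℓ_w·μ_k) is summable, and Σ_{w ∈ Fin n} Σ'_{k} c_k·ℓ_w·μ_k/(λ + ℓ_w·μ_k) ≤ C·n·ℓ̄^{1/α}·λ^{−1/α}. -/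
lemma aux_rewrite (c μ lam ℓ : ℝ) (hℓ : 0 < ℓ) (hlam : 0 < lam) (hμ : 0 ≤ μ) :
    c * (ℓ * μ) / (lam + ℓ * μ) = c * μ / (lam / ℓ + μ) := by
  have h1 : (0:ℝ) < lam + ℓ * μ := by positivity
  have h2 : (0:ℝ) < lam / ℓ + μ := by positivity
  rw [div_eq_div_iff h1.ne' h2.ne']
  field_simp

lemma aux_cs {n : ℕ} (x : Fin n → ℝ) (hx : ∀ i, 0 < x i) :
    (n : ℝ) ^ 2 ≤ (∑ i, x i) * ∑ i, (x i)⁻¹ := by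
  have h := Finset.sum_mul_sq_le_sq_mul_sq Finset.univ
    (fun i => Real.sqrt (x i)) (fun i => (Real.sqrt (x i))⁻¹)
  have h1 : ∀ i : Fin n, Real.sqrt (x i) * (Real.sqrt (x i))⁻¹ = 1 := fun i =>
    mul_inv_cancel₀ (ne_of_gt (Real.sqrt_pos.mpr (hx i)))
  have h2 : ∀ i : Fin n, Real.sqrt (x i) ^ 2 = x i := fun i => Real.sq_sqrt (hx i).le
  have h3 : ∀ i : Fin n, ((Real.sqrt (x i))⁻¹) ^ 2 = (x i)⁻¹ := fun i => by
    rw [inv_pow, Real.sq_sqrt (hx i).le]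
  simp only [h1, h2, h3, Finset.sum_const, Finset.card_univ, Fintype.card_fin,
    nsmul_eq_mul, mul_one] at h
  simpa using h

lemma aux_jensen {n : ℕ} (hn : 1 ≤ n) (lam μ : ℝ) (hlam : 0 < lam) (hμ : 0 ≤ μ)
    (ℓ : Fin n → ℝ) (hℓ : ∀ w, 0 ≤ ℓ w) :
    ∑ w, ℓ w * μ / (lam + ℓ w * μ) ≤
      (n : ℝ) * (((∑ w, ℓ w) / n) * μ / (lam + ((∑ w, ℓ w) / n) * μ)) := by
  have hnpos : (0 : ℝ) < n := by exact_mod_cast hn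
  set L : ℝ := (∑ w, ℓ w) / n with hLdef
  have hL : 0 ≤ L := by
    rw [hLdef]; exact div_nonneg (Finset.sum_nonneg fun w _ => hℓ w) hnpos.le
  have hdenpos : ∀ w : Fin n, 0 < lam + ℓ w * μ := fun w => by
    have := mul_nonneg (hℓ w) hμ; linarith
  have hLden : 0 < lam + L * μ := by
    have := mul_nonneg hL hμ; linarith
  have hsum : (∑ w, (lam + ℓ w * μ)) = n * (lam + L * μ) := by
    rw [Finset.sum_add_distrib]
    simp only [Finset.sum_const, Finset.card_univ, Fintype.card_fin, nsmul_eq_mul]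
    rw [← Finset.sum_mul, hLdef]
    field_simp
  have hcs := aux_cs (fun w => lam + ℓ w * μ) hdenpos
  rw [hsum] at hcs
  have hinv : (n : ℝ) / (lam + L * μ) ≤ ∑ w, (lam + ℓ w * μ)⁻¹ := by
    rw [div_le_iff₀ hLden]
    nlinarith [hcs]
  have key : ∀ w : Fin n, ℓ w * μ / (lam + ℓ w * μ) = 1 - lam * (lam + ℓ w * μ)⁻¹ := by
    intro w
    have hd : lam + ℓ w * μ ≠ 0 := (hdenpos w).ne'
    field_simp
    ring
  simp only [key]
  rw [Finset.sum_sub_distrib, ← Finset.mul_sum]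
  simp only [Finset.sum_const, Finset.card_univ, Fintype.card_fin, nsmul_eq_mul, mul_one]
  have step : lam * ((n : ℝ) / (lam + L * μ)) ≤ lam * ∑ w, (lam + ℓ w * μ)⁻¹ :=
    mul_le_mul_of_nonneg_left hinv hlam.le
  have final : (n : ℝ) - lam * ((n : ℝ) / (lam + L * μ)) = n * (L * μ / (lam + L * μ)) := by
    field_simp
    ring
  linarith [final, step]


/-- **Degrees-of-freedom bound (Appendix D.2).** Under the capacity condition
`∑'_k c_k μ_k / (t + μ_k) ≤ C t^{-1/α}` for every `t > 0`, the degrees of freedom of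
the pooled kernel with nonnegative spatial eigenvalues `ℓ_w` of mean `ℓ̄` satisfy
`∑_w ∑'_k c_k ℓ_w μ_k / (λ + ℓ_w μ_k) ≤ C n ℓ̄^{1/α} λ^{-1/α}`, the family over
`(w, k)` being summable. -/
theorem pooled_degrees_of_freedom_bound
    (n : ℕ) (hn : 1 ≤ n) (α C lam : ℝ) (hα : 0 < α) (hC : 0 ≤ C) (hlam : 0 < lam)
    (ℓ : Fin n → ℝ) (hℓ : ∀ w, 0 ≤ ℓ w)
    (c μ : ℕ → ℝ) (hc : ∀ k, 0 ≤ c k) (hμ : ∀ k, 0 ≤ μ k)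
    (hcap : ∀ t : ℝ, 0 < t →
      Summable (fun k => c k * μ k / (t + μ k)) ∧
      (∑' k : ℕ, c k * μ k / (t + μ k)) ≤ C * t ^ (-(1 / α))) :
    Summable (fun p : Fin n × ℕ =>
      c p.2 * (ℓ p.1 * μ p.2) / (lam + ℓ p.1 * μ p.2)) ∧
    (∑ w : Fin n, ∑' k : ℕ, c k * (ℓ w * μ k) / (lam + ℓ w * μ k)) ≤
      C * n * ((∑ w : Fin n, ℓ w) / n) ^ ((1 : ℝ) / α) * lam ^ (-(1 / α)) := by
  have hnpos : (0 : ℝ) < n := by exact_mod_cast hn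
  -- slice summability
  have hslice : ∀ w : Fin n,
      Summable (fun k => c k * (ℓ w * μ k) / (lam + ℓ w * μ k)) := by
    intro w
    rcases eq_or_lt_of_le (hℓ w) with h0 | hpos
    · simpa [← h0] using summable_zero
    · have : (fun k => c k * (ℓ w * μ k) / (lam + ℓ w * μ k))
          = fun k => c k * μ k / (lam / ℓ w + μ k) := by
        funext k; exact aux_rewrite _ _ _ _ hpos hlam (hμ k)
      rw [this]
      exact (hcap (lam / ℓ w) (by positivity)).1
  have hnonneg : ∀ p : Fin n × ℕ,
      0 ≤ c p.2 * (ℓ p.1 * μ p.2) / (lam + ℓ p.1 * μ p.2) := fun p => by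
    have := mul_nonneg (hℓ p.1) (hμ p.2)
    have := hc p.2
    positivity
  have hsummable : Summable (fun p : Fin n × ℕ =>
      c p.2 * (ℓ p.1 * μ p.2) / (lam + ℓ p.1 * μ p.2)) := by
    rw [summable_prod_of_nonneg hnonneg]
    exact ⟨fun w => hslice w, Summable.of_finite⟩
  refine ⟨hsummable, ?_⟩
  rcases eq_or_lt_of_le (Finset.sum_nonneg fun w _ => hℓ w) with hzero | hLpos
  · -- all ℓ w = 0
    have hall : ∀ w : Fin n, ℓ w = 0 := by
      intro w
      have := (Finset.sum_eq_zero_iff_of_nonneg (fun w _ => hℓ w)).mp hzero.symm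
      exact this w (Finset.mem_univ w)
    have hLHS : (∑ w : Fin n, ∑' k : ℕ, c k * (ℓ w * μ k) / (lam + ℓ w * μ k)) = 0 := by
      apply Finset.sum_eq_zero; intro w _
      simp [hall w]
    rw [hLHS, ← hzero]
    have : ((0:ℝ) / n) ^ ((1:ℝ)/α) = 0 := by
      rw [zero_div, Real.zero_rpow (by positivity)]
    rw [this, mul_zero, zero_mul]
  · set L : ℝ := (∑ w : Fin n, ℓ w) / n with hLdef
    have hL : 0 < L := by rw [hLdef]; positivity
    have ht : 0 < lam / L := by positivity
    -- swap sums
    have hswap : (∑ w : Fin n, ∑' k : ℕ, c k * (ℓ w * μ k) / (lam + ℓ w * μ k))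
        = ∑' k : ℕ, ∑ w : Fin n, c k * (ℓ w * μ k) / (lam + ℓ w * μ k) := by
      exact (Summable.tsum_finsetSum (fun w _ => hslice w)).symm
    rw [hswap]
    -- per-k bound
    have hbound : ∀ k : ℕ, (∑ w : Fin n, c k * (ℓ w * μ k) / (lam + ℓ w * μ k))
        ≤ (n : ℝ) * (c k * μ k / (lam / L + μ k)) := by
      intro k
      have hj := aux_jensen hn lam (μ k) hlam (hμ k) ℓ hℓ
      have h1 : (∑ w : Fin n, c k * (ℓ w * μ k) / (lam + ℓ w * μ k))
          = c k * ∑ w : Fin n, ℓ w * μ k / (lam + ℓ w * μ k) := by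
        rw [Finset.mul_sum]; congr 1; funext w; ring
      rw [h1]
      have h2 : (n : ℝ) * (c k * μ k / (lam / L + μ k))
          = c k * ((n : ℝ) * (L * μ k / (lam + L * μ k))) := by
        rw [← aux_rewrite (c k) (μ k) lam L hL hlam (hμ k)]; ring
      rw [h2]
      exact mul_le_mul_of_nonneg_left hj (hc k)
    have hsum1 : Summable (fun k => ∑ w : Fin n, c k * (ℓ w * μ k) / (lam + ℓ w * μ k)) :=
      summable_sum (fun w _ => hslice w)
    have hsum2 : Summable (fun k => (n : ℝ) * (c k * μ k / (lam / L + μ k))) :=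
      (hcap (lam / L) ht).1.mul_left _
    calc (∑' k : ℕ, ∑ w : Fin n, c k * (ℓ w * μ k) / (lam + ℓ w * μ k))
        ≤ ∑' k : ℕ, (n : ℝ) * (c k * μ k / (lam / L + μ k)) :=
          Summable.tsum_le_tsum hbound hsum1 hsum2
      _ = (n : ℝ) * ∑' k : ℕ, c k * μ k / (lam / L + μ k) := tsum_mul_left
      _ ≤ (n : ℝ) * (C * (lam / L) ^ (-(1/α))) :=
          mul_le_mul_of_nonneg_left (hcap (lam / L) ht).2 hnpos.le
      _ = C * n * L ^ ((1:ℝ)/α) * lam ^ (-(1/α)) := by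
          rw [Real.div_rpow hlam.le hL.le, Real.rpow_neg hL.le]
          field_simp
end

section
/- Let n ≥ 1 be an integer, E a real Hilbert space (complete real inner product space), and let H := PiLp 2 (fun _ : ZMod n => E) be the Hilbert space of families F : ZMod n → E with ⟪F, F'⟫ = Σ_u ⟪F(u), F'(u)⟫. Let h : ZMod n → ℝ with Σ_{u ∈ ZMod n} h(u) = 1 and let A : H → H be the pooling operator (A F)(u) := Σ_{v ∈ ZMod n} h(u − v)·F(v). Let w ∈ E, X a set, and Φ : X → H any map. Then the constant family F_w := (fun _ => w) ∈ H satisfies: (i) A* F_w = F_w, where A* is the Hilbert adjoint of A; (ii) ⟪F_w, A(Φ(x))⟫ = Σ_{u ∈ ZMod n} ⟪w, Φ(x)(u)⟫ for all x ∈ X; (iii) ‖F_w‖ = √n·‖w‖; and consequently (iv) the infimum of ‖F‖ over all F ∈ H satisfying ⟪F, A(Φ(x))⟫ = Σ_{u ∈ ZMod n} ⟪w, Φ(x)(u)⟫ for all x ∈ X is at most √n·‖w‖. -/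
open scoped RealInnerProductSpace

/-- `PiLp` over a finite index type with complete fibers is complete. -/
instance piLp_completeSpace (ι : Type*) (E : Type*) [NormedAddCommGroup E]
    [CompleteSpace E] : CompleteSpace (PiLp 2 fun _ : ι => E) := by
  have e : PiLp 2 (fun _ : ι => E) ≃ᵤ (∀ _ : ι, E) :=
    { toEquiv := WithLp.equiv 2 _
      uniformContinuous_toFun := PiLp.uniformContinuous_ofLp _ _
      uniformContinuous_invFun := PiLp.uniformContinuous_toLp _ _ }
  exact e.completeSpace_iff.mpr inferInstance

/-- **Norm computation `‖f*‖_{K₁} ≤ √|Ω| ‖g‖` in Proposition 3.** On the Hilbert space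
`H = PiLp 2 (fun _ : ZMod n => E)`, let `A` be the pooling operator with ℓ¹-normalized
filter `h`, i.e. `(A F) u = ∑ v, h (u - v) • F v`. Then the constant family
`F_w = (fun _ => w)` satisfies: (i) `A* F_w = F_w`; (ii) `⟪F_w, A (Φ x)⟫ = ∑ u, ⟪w, Φ x u⟫`;
(iii) `‖F_w‖ = √n ‖w‖`; and (iv) the infimum of `‖F‖` over representations
`⟪F, A (Φ x)⟫ = ∑ u, ⟪w, Φ x u⟫` is at most `√n ‖w‖`. -/
theorem one_layer_invariant_target_norm
    (n : ℕ) [NeZero n] {E : Type*} [NormedAddCommGroup E] [InnerProductSpace ℝ E]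
    [CompleteSpace E]
    (h : ZMod n → ℝ) (hh : ∑ u : ZMod n, h u = 1)
    (A : PiLp 2 (fun _ : ZMod n => E) →L[ℝ] PiLp 2 (fun _ : ZMod n => E))
    (hA : ∀ (F : PiLp 2 (fun _ : ZMod n => E)) (u : ZMod n),
      A F u = ∑ v : ZMod n, h (u - v) • F v)
    (w : E) {X : Type*} (Φ : X → PiLp 2 (fun _ : ZMod n => E)) :
    let Fw : PiLp 2 (fun _ : ZMod n => E) :=
      (WithLp.equiv 2 (∀ _ : ZMod n, E)).symm (fun _ => w)
    ContinuousLinearMap.adjoint A Fw = Fw ∧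
    (∀ x : X, ⟪Fw, A (Φ x)⟫ = ∑ u : ZMod n, ⟪w, Φ x u⟫) ∧
    ‖Fw‖ = Real.sqrt n * ‖w‖ ∧
    sInf {c : ℝ | ∃ F : PiLp 2 (fun _ : ZMod n => E),
        (∀ x : X, ⟪F, A (Φ x)⟫ = ∑ u : ZMod n, ⟪w, Φ x u⟫) ∧ c = ‖F‖} ≤
      Real.sqrt n * ‖w‖ := by

  intro Fw
  -- key computation: ⟪Fw, A F⟫ = ∑ v, ⟪w, F v⟫ for all F
  have key : ∀ F : PiLp 2 (fun _ : ZMod n => E),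
      ⟪Fw, A F⟫ = ∑ v : ZMod n, ⟪w, F v⟫ := by
    intro F
    have : ⟪Fw, A F⟫ = ∑ u : ZMod n, ⟪w, A F u⟫ := by
      simp [PiLp.inner_apply, Fw]
    rw [this]
    have : ∀ u : ZMod n, ⟪w, A F u⟫ = ∑ v : ZMod n, h (u - v) * ⟪w, F v⟫ := by
      intro u
      rw [hA]
      rw [inner_sum]
      exact Finset.sum_congr rfl fun v _ => real_inner_smul_right _ _ _
    simp_rw [this]
    rw [Finset.sum_comm]
    refine Finset.sum_congr rfl fun v _ => ?_
    rw [← Finset.sum_mul]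
    have : ∑ u : ZMod n, h (u - v) = 1 := by
      rw [← hh]
      exact Fintype.sum_equiv (Equiv.subRight v) _ _ fun u => rfl
    rw [this, one_mul]
  have keyFw : ∀ F : PiLp 2 (fun _ : ZMod n => E),
      ⟪Fw, F⟫ = ∑ v : ZMod n, ⟪w, F v⟫ := by
    intro F; simp [PiLp.inner_apply, Fw]
  have hadj : ContinuousLinearMap.adjoint A Fw = Fw := by
    refine ext_inner_right ℝ fun F => ?_
    rw [ContinuousLinearMap.adjoint_inner_left, key, keyFw]
  have hrep : ∀ x : X, ⟪Fw, A (Φ x)⟫ = ∑ u : ZMod n, ⟪w, Φ x u⟫ := fun x => key (Φ x)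
  have hnorm : ‖Fw‖ = Real.sqrt n * ‖w‖ := by
    have h1 : ‖Fw‖ ^ 2 = (n : ℝ) * ‖w‖ ^ 2 := by
      rw [← real_inner_self_eq_norm_sq, keyFw]
      simp [real_inner_self_eq_norm_sq, Fw, Finset.card_univ]
    have h2 : ‖Fw‖ = Real.sqrt ((n : ℝ) * ‖w‖ ^ 2) := by
      rw [← h1, Real.sqrt_sq (norm_nonneg _)]
    rw [h2, Real.sqrt_mul (by positivity), Real.sqrt_sq (norm_nonneg _)]
  refine ⟨hadj, hrep, hnorm, ?_⟩
  have hmem : Real.sqrt n * ‖w‖ ∈ {c : ℝ | ∃ F : PiLp 2 (fun _ : ZMod n => E),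
      (∀ x : X, ⟪F, A (Φ x)⟫ = ∑ u : ZMod n, ⟪w, Φ x u⟫) ∧ c = ‖F‖} :=
    ⟨Fw, hrep, hnorm.symm⟩
  exact csInf_le ⟨0, fun c ⟨F, _, hc⟩ => hc ▸ norm_nonneg F⟩ hmem
end
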